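/- Let α ∈ RO. The two conditions are equivalent: (i) ∫₁^∞ t^{2l+n-1} α(t)^{-2} dt < ∞; (ii) the function ξ ↦ ⟨ξ⟩^{l} / α(⟨ξ⟩) belongs to L²(ℝⁿ). Consequently, under (i), for every w ∈ H^α(ℝⁿ) and every multi-index β with |β| ≤ l, the function ξ^β ŵ(ξ) is integrable on ℝⁿ. -/

import Mathlib

noncomputable section
open MeasureTheory Filter Set Real

/-- Class RO of RO-varying (in the sense of Avakumović) functions at infinity:
Borel measurable on `[1,∞)`, positive there, with `c⁻¹ ≤ α(l*t)/α(t) ≤ c`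
for all `t ≥ 1`, `l ∈ [1,b]`. -/
def RO (α : ℝ → ℝ) : Prop :=
  (∀ t, 1 ≤ t → 0 < α t) ∧ (Measurable fun t : Set.Ici (1:ℝ) => α t.1) ∧
  ∃ b : ℝ, 1 < b ∧ ∃ c : ℝ, 1 ≤ c ∧ ∀ t, 1 ≤ t → ∀ l, 1 ≤ l → l ≤ b →
    c⁻¹ ≤ α (l * t) / α t ∧ α (l * t) / α t ≤ c

/-- Exponents admitting a lower power bound `c * l^s ≤ α(l*t)/α(t)`. -/
def roLowerSet (α : ℝ → ℝ) : Set ℝ :=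
  {s | ∃ c : ℝ, 0 < c ∧ ∀ t, 1 ≤ t → ∀ l, 1 ≤ l → c * l ^ s ≤ α (l * t) / α t}

/-- Exponents admitting an upper power bound `α(l*t)/α(t) ≤ c * l^s`. -/
def roUpperSet (α : ℝ → ℝ) : Set ℝ :=
  {s | ∃ c : ℝ, 0 < c ∧ ∀ t, 1 ≤ t → ∀ l, 1 ≤ l → α (l * t) / α t ≤ c * l ^ s}

/-- Lower Matuszewska index. -/
def sigma0 (α : ℝ → ℝ) : ℝ := sSup (roLowerSet α)

/-- Upper Matuszewska index. -/
def sigma1 (α : ℝ → ℝ) : ℝ := sInf (roUpperSet α)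

open scoped ENNReal NNReal

abbrev Eucl (n : ℕ) := EuclideanSpace ℝ (Fin n)

/-- The smoothed modulus `⟨ξ⟩ = (1+|ξ|²)^{1/2}`. -/
def jap {n : ℕ} (ξ : Eucl n) : ℝ := Real.sqrt (1 + ‖ξ‖ ^ 2)

/-- The norm of the generalized Sobolev space `H^α(ℝⁿ)` computed on the
Fourier-transform side: `‖w‖_α = (∫ α(⟨ξ⟩)² |ŵ(ξ)|² dξ)^{1/2}`, as an `ℝ≥0∞` value. -/
def HnormE {n : ℕ} (α : ℝ → ℝ) (W : Eucl n → ℂ) : ℝ≥0∞ :=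
  (∫⁻ ξ, ENNReal.ofReal ((α (jap ξ)) ^ 2) * (‖W ξ‖₊ : ℝ≥0∞) ^ 2) ^ (1/2 : ℝ)

/-! In polar coordinates, `‖⟨ξ⟩^l / α(⟨ξ⟩)‖₂²` is a multiple of
`∫₀^∞ r^(n-1) (⟨r⟩^l / α(⟨r⟩))² dr`. The part over `(0,1)` is finite. For `r ≥ 1` we have
`r ≤ ⟨r⟩ ≤ 2r`, and finitely many applications of the RO bound make `α(⟨r⟩)` and `α(r)`
uniformly comparable, so the integrand is comparable to `r^(2l+n-1) α(r)⁻²`.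
For the consequence, `|ξ^β| ≤ ⟨ξ⟩^l`, so `ξ^β ŵ` is dominated by the product of the two
`L²` functions `⟨ξ⟩^l / α(⟨ξ⟩)` and `α(⟨ξ⟩) ŵ`, which is integrable by Cauchy–Schwarz. -/

theorem one_le_sqrt_one_add_sq (r : ℝ) : 1 ≤ √(1 + r ^ 2) := by
  simp [sq_nonneg]

theorem le_sqrt_one_add_sq (r : ℝ) : r ≤ √(1 + r ^ 2) :=
  Real.le_sqrt_of_sq_le (by linarith)

theorem sqrt_one_add_sq_le_two_mul {r : ℝ} (hr : 1 ≤ r) : √(1 + r ^ 2) ≤ 2 * r :=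
  Real.sqrt_le_iff.2 ⟨by linarith, by nlinarith⟩

theorem one_le_jap {n : ℕ} (ξ : Eucl n) : 1 ≤ jap ξ :=
  one_le_sqrt_one_add_sq ‖ξ‖

theorem abs_apply_le_jap {n : ℕ} (ξ : Eucl n) (i : Fin n) : |ξ i| ≤ jap ξ :=
  (PiLp.norm_apply_le ξ i).trans (le_sqrt_one_add_sq ‖ξ‖)

theorem norm_monomial_le_jap_pow {n : ℕ} (ξ : Eucl n) (β : Fin n → ℕ) :
    ‖∏ i, (ξ i : ℂ) ^ β i‖ ≤ jap ξ ^ ∑ i, β i := by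
  rw [norm_prod, ← Finset.prod_pow_eq_pow_sum]
  gcongr with i
  simpa using pow_le_pow_left₀ (abs_nonneg _) (abs_apply_le_jap ξ i) (β i)

theorem hoermander_integrand_eq {n : ℕ} (hn : 1 ≤ n) (l : ℕ) (α : ℝ → ℝ) :
    (fun t : ℝ => t ^ (2 * (l : ℝ) + n - 1) * ((α t)⁻¹) ^ 2) =
      fun t => t ^ (n - 1) * (t ^ l / α t) ^ 2 := by
  have hexp : 2 * (l : ℝ) + n - 1 = ((n - 1 + 2 * l : ℕ) : ℝ) := by
    push_cast [Nat.cast_sub hn]; ring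
  funext t
  rw [hexp, Real.rpow_natCast, pow_add, pow_mul, div_pow, div_eq_mul_inv, inv_pow]
  ring

namespace RO

variable {α : ℝ → ℝ}

theorem measurable_comp (hα : RO α) {X : Type*} [MeasurableSpace X] {f : X → ℝ}
    (hf : Measurable f) (hf1 : ∀ x, 1 ≤ f x) : Measurable fun x => α (f x) :=
  hα.2.1.comp (hf.subtype_mk (p := fun t => t ∈ Ici 1) (h := hf1))

theorem aemeasurable_restrict_Ici (hα : RO α) : AEMeasurable α (volume.restrict (Ici 1)) :=
  ⟨fun t => α (max t 1), hα.measurable_comp (measurable_id.max measurable_const) (le_max_right · 1),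
    ae_restrict_of_forall_mem measurableSet_Ici fun t ht => by simp [max_eq_left (mem_Ici.1 ht)]⟩

theorem exists_step (hα : RO α) : ∃ b, 1 < b ∧ ∃ c, 1 ≤ c ∧
    ∀ t s, 1 ≤ t → t ≤ s → s ≤ b * t → α s ≤ c * α t ∧ α t ≤ c * α s := by
  obtain ⟨hpos, -, b, hb, c, hc, hbc⟩ := hα
  refine ⟨b, hb, c, hc, fun t s ht hts hsb => ?_⟩
  have ht0 : 0 < t := by linarith
  have hst : s / t * t = s := div_mul_cancel₀ s ht0.ne'
  obtain ⟨hlo, hhi⟩ := hbc t ht (s / t) ((one_le_div ht0).2 hts) ((div_le_iff₀ ht0).2 hsb)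
  rw [hst, div_le_iff₀ (hpos t ht)] at hhi
  rw [hst, le_div_iff₀ (hpos t ht), inv_mul_le_iff₀ (by linarith)] at hlo
  exact ⟨hhi, hlo⟩

theorem exists_comparable (hα : RO α) (Λ : ℝ) : ∃ C, 0 < C ∧
    ∀ t s, 1 ≤ t → t ≤ s → s ≤ Λ * t → α s ≤ C * α t ∧ α t ≤ C * α s := by
  obtain ⟨b, hb, c, hc, hstep⟩ := hα.exists_step
  -- chain steps through `u = min s (b ^ k * t)`, which satisfies `u ≤ s ≤ b * u`
  have key : ∀ k : ℕ, ∀ t s, 1 ≤ t → t ≤ s → s ≤ b ^ k * t →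
      α s ≤ c ^ k * α t ∧ α t ≤ c ^ k * α s := by
    intro k
    induction k with
    | zero =>
      intro t s _ hts hst
      obtain rfl : s = t := le_antisymm (by simpa using hst) hts
      simp
    | succ k ih =>
      intro t s ht hts hst
      have hsu : s ≤ b * min s (b ^ k * t) := by
        rcases min_choice s (b ^ k * t) with h | h <;> rw [h]
        · exact le_mul_of_one_le_left (by linarith) hb.le
        · rw [← mul_assoc, ← pow_succ']; exact hst
      set u := min s (b ^ k * t)
      have htu : t ≤ u := le_min hts (le_mul_of_one_le_left (by linarith) (one_le_pow₀ hb.le))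
      have hus : u ≤ s := min_le_left _ _
      obtain ⟨h1, h2⟩ := ih t u ht htu (min_le_right _ _)
      obtain ⟨h3, h4⟩ := hstep u s (ht.trans htu) hus hsu
      have hc0 : 0 ≤ c := by linarith
      constructor
      · calc α s ≤ c * α u := h3
          _ ≤ c * (c ^ k * α t) := by gcongr
          _ = c ^ (k + 1) * α t := by ring
      · calc α t ≤ c ^ k * α u := h2
          _ ≤ c ^ k * (c * α s) := by gcongr
          _ = c ^ (k + 1) * α s := by ring
  obtain ⟨k, hk⟩ := pow_unbounded_of_one_lt Λ hb
  refine ⟨c ^ k, by positivity, fun t s ht hts hst => key k t s ht hts ?_⟩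
  exact hst.trans (mul_le_mul_of_nonneg_right hk.le (by linarith))

theorem exists_pow_div_comparable (hα : RO α) (l : ℕ) (Λ : ℝ) : ∃ K : ℝ,
    ∀ t s, 1 ≤ t → t ≤ s → s ≤ Λ * t →
      t ^ l / α t ≤ K * (s ^ l / α s) ∧ s ^ l / α s ≤ K * (t ^ l / α t) := by
  obtain ⟨C, hC, hcomp⟩ := hα.exists_comparable Λ
  refine ⟨Λ ^ l * C, fun t s ht hts hst => ?_⟩
  have hαt := hα.1 t ht
  have hαs := hα.1 s (ht.trans hts)
  have hΛ : 1 ≤ Λ := by nlinarith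
  have bound : ∀ x y, 0 ≤ x → x ≤ Λ * y → 0 < α x → 0 < α y → α y ≤ C * α x →
      x ^ l / α x ≤ Λ ^ l * C * (y ^ l / α y) := fun x y hx hxy hαx hαy hyx =>
    calc x ^ l / α x ≤ (Λ * y) ^ l / (α y / C) :=
          div_le_div₀ (pow_nonneg (hx.trans hxy) l) (pow_le_pow_left₀ hx hxy l) (by positivity)
            ((div_le_iff₀ hC).2 (by linarith))
      _ = Λ ^ l * C * (y ^ l / α y) := by field_simp; ring
  obtain ⟨hs, ht'⟩ := hcomp t s ht hts hst
  exact ⟨bound t s (by linarith) (by nlinarith) hαt hαs hs, bound s t (by linarith) hst hαs hαt ht'⟩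

theorem measurable_sqrt_one_add_sq_pow_div (hα : RO α) (l : ℕ) :
    Measurable fun r => √(1 + r ^ 2) ^ l / α √(1 + r ^ 2) := by
  have hρ : Measurable fun r : ℝ => √(1 + r ^ 2) := by fun_prop
  exact (hρ.pow_const l).div (hα.measurable_comp hρ one_le_sqrt_one_add_sq)

theorem memLp_two_jap_pow_div_iff (hα : RO α) {n : ℕ} (hn : 1 ≤ n) (l : ℕ) :
    MemLp (fun ξ : Eucl n => jap ξ ^ l / α (jap ξ)) 2 volume ↔
      IntegrableOn (fun r => r ^ (n - 1) * (√(1 + r ^ 2) ^ l / α √(1 + r ^ 2)) ^ 2) (Ioi 0) := by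
  have : Nonempty (Fin n) := ⟨⟨0, hn⟩⟩
  have hmeas : Measurable fun ξ : Eucl n => jap ξ ^ l / α (jap ξ) :=
    (hα.measurable_sqrt_one_add_sq_pow_div l).comp measurable_norm
  rw [memLp_two_iff_integrable_sq hmeas.aestronglyMeasurable]
  simpa [finrank_euclideanSpace, jap] using
    integrable_fun_norm_addHaar (volume : Measure (Eucl n))
      (f := fun r => (√(1 + r ^ 2) ^ l / α √(1 + r ^ 2)) ^ 2)

theorem integrableOn_Ioi_zero_iff_Ici_one (hα : RO α) (n l : ℕ) :
    IntegrableOn (fun r => r ^ (n - 1) * (√(1 + r ^ 2) ^ l / α √(1 + r ^ 2)) ^ 2) (Ioi 0) ↔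
      IntegrableOn (fun r => r ^ (n - 1) * (√(1 + r ^ 2) ^ l / α √(1 + r ^ 2)) ^ 2) (Ici 1) := by
  obtain ⟨K, hK⟩ := hα.exists_pow_div_comparable l 2
  have hbdd : IntegrableOn
      (fun r => r ^ (n - 1) * (√(1 + r ^ 2) ^ l / α √(1 + r ^ 2)) ^ 2) (Ioo 0 1) := by
    refine IntegrableOn.of_bound measure_Ioo_lt_top
      (((measurable_id.pow_const _).mul
        ((hα.measurable_sqrt_one_add_sq_pow_div l).pow_const 2)).aestronglyMeasurable)
      ((K * (1 ^ l / α 1)) ^ 2) (ae_restrict_of_forall_mem measurableSet_Ioo fun r hr => ?_)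
    obtain ⟨hr0, hr1⟩ := hr
    have hρ := (hK 1 _ le_rfl (one_le_sqrt_one_add_sq r)
      (Real.sqrt_le_iff.2 ⟨by norm_num, by nlinarith⟩)).2
    have := hα.1 _ (one_le_sqrt_one_add_sq r)
    rw [Real.norm_of_nonneg (by positivity)]
    calc r ^ (n - 1) * (√(1 + r ^ 2) ^ l / α √(1 + r ^ 2)) ^ 2
        ≤ 1 * (K * (1 ^ l / α 1)) ^ 2 := by
          gcongr
          exact pow_le_one₀ hr0.le hr1.le
      _ = (K * (1 ^ l / α 1)) ^ 2 := one_mul _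
  rw [← Ioo_union_Ici_eq_Ioi zero_lt_one, integrableOn_union]
  exact and_iff_right hbdd

theorem integrableOn_Ici_one_iff_of_sqrt_one_add_sq (hα : RO α) (n l : ℕ) :
    IntegrableOn (fun r => r ^ (n - 1) * (r ^ l / α r) ^ 2) (Ici 1) ↔
      IntegrableOn (fun r => r ^ (n - 1) * (√(1 + r ^ 2) ^ l / α √(1 + r ^ 2)) ^ 2) (Ici 1) := by
  obtain ⟨K, hK⟩ := hα.exists_pow_div_comparable l 2
  have hsq : ∀ {r x y : ℝ}, 1 ≤ r → 0 ≤ x → x ≤ K * y →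
      ‖r ^ (n - 1) * x ^ 2‖ ≤ K ^ 2 * (r ^ (n - 1) * y ^ 2) := fun hr hx hxy => by
    rw [Real.norm_of_nonneg (by positivity), mul_left_comm, ← mul_pow]
    gcongr
  have hbound := fun r (hr : r ∈ Ici (1 : ℝ)) =>
    hK r _ hr (le_sqrt_one_add_sq r) (sqrt_one_add_sq_le_two_mul hr)
  constructor
  · refine fun h => (h.const_mul (K ^ 2)).mono'
      (((measurable_id.pow_const _).mul
        ((hα.measurable_sqrt_one_add_sq_pow_div l).pow_const 2)).aestronglyMeasurable)
      (ae_restrict_of_forall_mem measurableSet_Ici fun r hr => hsq hr ?_ (hbound r hr).2)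
    have := hα.1 _ (one_le_sqrt_one_add_sq r)
    positivity
  · refine fun h => (h.const_mul (K ^ 2)).mono'
      (((measurable_id.pow_const _).aemeasurable.mul
        (((measurable_id.pow_const l).aemeasurable.div
          hα.aemeasurable_restrict_Ici).pow_const 2)).aestronglyMeasurable)
      (ae_restrict_of_forall_mem measurableSet_Ici fun r hr => hsq hr ?_ (hbound r hr).1)
    have := hα.1 r hr
    have : (0 : ℝ) ≤ r := zero_le_one.trans hr
    positivity

theorem memLp_two_of_HnormE_lt_top (hα : RO α) {n : ℕ} {W : Eucl n → ℂ} (hW : Measurable W)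
    (hWα : HnormE α W < ⊤) : MemLp (fun ξ => α (jap ξ) * ‖W ξ‖) 2 volume := by
  refine ⟨((hα.measurable_comp (by unfold jap; fun_prop) one_le_jap).mul
    hW.norm).aestronglyMeasurable, ?_⟩
  convert hWα using 1
  rw [eLpNorm_eq_lintegral_rpow_enorm_toReal two_ne_zero ENNReal.ofNat_ne_top, HnormE]
  simp only [enorm_mul, enorm_norm, mul_pow, ENNReal.toReal_ofNat, ENNReal.rpow_ofNat, one_div]
  congr 2 with ξ
  rw [← sq_abs, ENNReal.ofReal_pow (abs_nonneg _), ← Real.enorm_eq_ofReal_abs, enorm_eq_nnnorm,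
    enorm_eq_nnnorm]

theorem integrable_monomial_mul (hα : RO α) {n l : ℕ}
    (hφ : MemLp (fun ξ : Eucl n => jap ξ ^ l / α (jap ξ)) 2 volume) {W : Eucl n → ℂ}
    (hW : Measurable W) (hWα : HnormE α W < ⊤) {β : Fin n → ℕ} (hβ : ∑ i, β i ≤ l) :
    Integrable fun ξ => (∏ i, (ξ i : ℂ) ^ β i) * W ξ := by
  have : ENNReal.HolderTriple 2 2 1 := ⟨by simp [ENNReal.inv_two_add_inv_two]⟩
  have hprod := hφ.integrable_mul (hα.memLp_two_of_HnormE_lt_top hW hWα)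
  refine hprod.mono' (by fun_prop) (Eventually.of_forall fun ξ => ?_)
  have := hα.1 _ (one_le_jap ξ)
  calc ‖(∏ i, (ξ i : ℂ) ^ β i) * W ξ‖ ≤ jap ξ ^ l * ‖W ξ‖ := by
        rw [norm_mul]
        gcongr
        exact (norm_monomial_le_jap_pow ξ β).trans (pow_le_pow_right₀ (one_le_jap ξ) hβ)
    _ = jap ξ ^ l / α (jap ξ) * (α (jap ξ) * ‖W ξ‖) := by field_simp

end RO

/-- Equivalence of the Hörmander condition `∫₁^∞ t^{2l+n-1} α(t)⁻² dt < ∞` with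
`⟨ξ⟩^l / α(⟨ξ⟩) ∈ L²(ℝⁿ)`; consequently, under this condition, `ξ^β ŵ(ξ)` is
integrable for every `w ∈ H^α(ℝⁿ)` and every multi-index `|β| ≤ l`. -/
theorem hoermander_condition_equiv (n l : ℕ) (hn : 1 ≤ n) (α : ℝ → ℝ) (hα : RO α) :
    (IntegrableOn
        (fun t : ℝ => t ^ (2 * (l : ℝ) + n - 1) * ((α t)⁻¹) ^ 2) (Set.Ici 1) ↔
      MemLp (fun ξ : Eucl n => (jap ξ) ^ (l : ℝ) / α (jap ξ)) 2 volume) ∧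
    (IntegrableOn
        (fun t : ℝ => t ^ (2 * (l : ℝ) + n - 1) * ((α t)⁻¹) ^ 2) (Set.Ici 1) →
      ∀ W : Eucl n → ℂ, Measurable W → HnormE α W < ⊤ →
        ∀ β : Fin n → ℕ, (∑ i, β i) ≤ l →
          Integrable (fun ξ : Eucl n => (∏ i, (ξ i : ℂ) ^ (β i)) * W ξ)) := by
  have key : IntegrableOn (fun t : ℝ => t ^ (2 * (l : ℝ) + n - 1) * ((α t)⁻¹) ^ 2) (Ici 1) ↔
      MemLp (fun ξ : Eucl n => jap ξ ^ l / α (jap ξ)) 2 volume := by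
    rw [hoermander_integrand_eq hn, hα.integrableOn_Ici_one_iff_of_sqrt_one_add_sq,
      ← hα.integrableOn_Ioi_zero_iff_Ici_one, hα.memLp_two_jap_pow_div_iff hn]
  simp only [Real.rpow_natCast]
  exact ⟨key, fun hF W hW hWα β hβ => hα.integrable_monomial_mul (key.1 hF) hW hWα hβ⟩
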